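/- Let d, k ≥ 1, let W, W' : Fin k → ℝ^d and b, b' : Fin k → ℝ with W' j = W j and b' j = b j for all j ≠ g, and let h, h' be the clipped maxout outputs computed from (W, b) and (W', b') respectively. If x ∈ ℝ^d satisfies h'(x) ≠ h(x), then ⟪x, W j⟫ + b j < 0 for every j ≠ g; that is, the interfered examples lie in the set {x | ∀ j ≠ g, ⟪x, W j⟫ + b j < 0}. -/

import Mathlib

/-! Every clipped unit is at most `0`, so a single unit with nonnegative pre-activation pins
`h(x)` to `0`. If an unchanged unit `j ≠ g` is nonnegative at `x`, it pins both `h(x)` and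
`h'(x)` to `0`, and `x` is not interfered. -/

open RealInnerProductSpace

/-- Clipped maxout unit: `h(x) = max_j min(⟪x, W j⟫ + b j, 0)`. -/
noncomputable def clippedMaxout {d k : ℕ} (hk : 1 ≤ k)
    (W : Fin k → EuclideanSpace ℝ (Fin d)) (b : Fin k → ℝ)
    (x : EuclideanSpace ℝ (Fin d)) : ℝ :=
  Finset.univ.sup' (Finset.univ_nonempty_iff.mpr ⟨⟨0, hk⟩⟩)
    fun j => min (⟪x, W j⟫ + b j) 0

section ClippedMaxout

variable {d k : ℕ} (hk : 1 ≤ k) (W : Fin k → EuclideanSpace ℝ (Fin d)) (b : Fin k → ℝ)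
  (x : EuclideanSpace ℝ (Fin d))

theorem clippedMaxout_le_zero : clippedMaxout hk W b x ≤ 0 :=
  Finset.sup'_le _ _ fun _ _ => min_le_right _ _

theorem clippedMaxout_eq_zero_of_nonneg {j : Fin k} (hj : 0 ≤ ⟪x, W j⟫ + b j) :
    clippedMaxout hk W b x = 0 :=
  le_antisymm (clippedMaxout_le_zero hk W b x) <|
    (min_eq_right hj).ge.trans <|
      Finset.le_sup' (fun i => min (⟪x, W i⟫ + b i) 0) (Finset.mem_univ j)

end ClippedMaxout

theorem interfered_examples_in_convex_region_general
    {d k : ℕ} (hk : 1 ≤ k)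
    (W W' : Fin k → EuclideanSpace ℝ (Fin d)) (b b' : Fin k → ℝ) (g : Fin k)
    (hW : ∀ j, j ≠ g → W' j = W j) (hb : ∀ j, j ≠ g → b' j = b j)
    (x : EuclideanSpace ℝ (Fin d))
    (hx : clippedMaxout hk W' b' x ≠ clippedMaxout hk W b x) :
    ∀ j, j ≠ g → ⟪x, W j⟫ + b j < 0 := by
  intro j hjg
  by_contra! hj
  have hj' : 0 ≤ ⟪x, W' j⟫ + b' j := by rwa [hW j hjg, hb j hjg]
  exact hx <| (clippedMaxout_eq_zero_of_nonneg hk W' b' x hj').trans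
    (clippedMaxout_eq_zero_of_nonneg hk W b x hj).symm

theorem interfered_examples_in_convex_region
    {d k : ℕ} (hd : 1 ≤ d) (hk : 1 ≤ k)
    (W W' : Fin k → EuclideanSpace ℝ (Fin d)) (b b' : Fin k → ℝ) (g : Fin k)
    (hW : ∀ j, j ≠ g → W' j = W j) (hb : ∀ j, j ≠ g → b' j = b j)
    (x : EuclideanSpace ℝ (Fin d))
    (hx : clippedMaxout hk W' b' x ≠ clippedMaxout hk W b x) :
    ∀ j, j ≠ g → ⟪x, W j⟫ + b j < 0 :=
  interfered_examples_in_convex_region_general hk W W' b b' g hW hb x hx
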